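/- Chen's formula is asymptotic to the Gamma function: lim_{x→∞} Γ(x+1) / (√(2πx)·(x/e)^x·(1 + 1/(12x³ + (24/7)x - 1/2))^(x² + 53/210)) = 1. -/

import Mathlib

/-!
Log-convexity of `Γ` pins `log Γ (x + 1)` to within `1 / x` of `log ⌊x⌋₊! + (x - ⌊x⌋₊) log x`,
and `log (√(2πx) (x/e)^x)` satisfies the same interpolation up to `1 / ⌊x⌋₊`, so Stirling's
formula for factorials extends to `Γ (x + 1)` along the reals. Chen's extra factor tends to `1`
because `(1 + 1/D)^p ≤ exp (p / D)` with `p / D = O(1/x)`.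
-/

open Real Filter
open scoped Nat

namespace Real

lemma log_sub_log_le_sub_div {a b : ℝ} (ha : 0 < a) (hb : 0 < b) :
    log b - log a ≤ (b - a) / a := by
  have := log_le_sub_one_of_pos (div_pos hb ha)
  rw [log_div hb.ne' ha.ne'] at this
  rwa [sub_div, div_self ha.ne']

lemma sub_div_le_log_sub_log {a b : ℝ} (ha : 0 < a) (hb : 0 < b) :
    (b - a) / b ≤ log b - log a := by
  have := one_sub_inv_le_log_of_pos (div_pos hb ha)
  rw [log_div hb.ne' ha.ne', inv_div] at this
  rwa [sub_div, div_self hb.ne']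

lemma log_Gamma_add_one_le {x y : ℝ} (hy : -1 < y) (hyx : y ≤ x) (hxy : x ≤ y + 1) :
    log (Gamma (x + 1)) ≤ log (Gamma (y + 1)) + (x - y) * log (y + 1) := by
  have h := convexOn_log_Gamma.2 (Set.mem_Ioi.2 (by linarith : (0 : ℝ) < y + 1))
    (Set.mem_Ioi.2 (by linarith : (0 : ℝ) < y + 1 + 1))
    (by linarith : 0 ≤ 1 - (x - y)) (by linarith : 0 ≤ x - y) (by ring)
  have hcomb : (1 - (x - y)) * (y + 1) + (x - y) * (y + 1 + 1) = x + 1 := by ring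
  have hpos : 0 < Gamma (y + 1) := Gamma_pos_of_pos (by linarith)
  simp only [Function.comp_apply, smul_eq_mul] at h
  rw [hcomb, Gamma_add_one (s := y + 1) (by linarith), log_mul (by linarith) hpos.ne'] at h
  linarith

lemma log_Gamma_add_one_ge {x y : ℝ} (hy : -1 < y) (hyx : y ≤ x) (hxy : x ≤ y + 1) :
    log (Gamma (y + 1)) + log (y + 1) - (1 - (x - y)) * log (x + 1) ≤
      log (Gamma (x + 1)) := by
  have h := convexOn_log_Gamma.2 (Set.mem_Ioi.2 (by linarith : (0 : ℝ) < x + 1))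
    (Set.mem_Ioi.2 (by linarith : (0 : ℝ) < x + 1 + 1))
    (by linarith : 0 ≤ x - y) (by linarith : 0 ≤ 1 - (x - y)) (by ring)
  have hcomb : (x - y) * (x + 1) + (1 - (x - y)) * (x + 1 + 1) = y + 1 + 1 := by ring
  have hpos : 0 < Gamma (x + 1) := Gamma_pos_of_pos (by linarith)
  simp only [Function.comp_apply, smul_eq_mul] at h
  rw [hcomb, Gamma_add_one (s := y + 1) (by linarith), Gamma_add_one (s := x + 1) (by linarith),
    log_mul (by linarith) (Gamma_pos_of_pos (by linarith)).ne', log_mul (by linarith) hpos.ne'] at h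
  linarith

lemma abs_log_Gamma_add_one_sub_le {x y : ℝ} (hy : -1 < y) (hyx : y ≤ x) (hxy : x ≤ y + 1)
    (hx : 0 < x) :
    |log (Gamma (x + 1)) - log (Gamma (y + 1)) - (x - y) * log x| ≤ 1 / x := by
  have hup := log_Gamma_add_one_le hy hyx hxy
  have hlo := log_Gamma_add_one_ge hy hyx hxy
  have h₁ : log (y + 1) - log x ≤ (1 - (x - y)) / x := by
    have := log_sub_log_le_sub_div hx (by linarith : 0 < y + 1)
    rwa [show y + 1 - x = 1 - (x - y) by ring] at this
  have h₂ : 0 ≤ log (y + 1) - log x := sub_nonneg.2 (log_le_log hx (by linarith))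
  have h₃ : log (x + 1) - log x ≤ 1 / x := by
    simpa using log_sub_log_le_sub_div hx (by linarith : 0 < x + 1)
  have hθ : 0 ≤ 1 - (x - y) := by linarith
  have h1x : (1 - (x - y)) / x ≤ 1 / x := by gcongr; linarith
  rw [abs_le]
  constructor
  · nlinarith [mul_le_mul_of_nonneg_left h₃ hθ]
  · nlinarith [mul_le_mul_of_nonneg_left h₁ (sub_nonneg.2 hyx)]

end Real

noncomputable def stirlingApprox (x : ℝ) : ℝ := √(2 * π * x) * (x / exp 1) ^ x

lemma stirlingApprox_pos {x : ℝ} (hx : 0 < x) : 0 < stirlingApprox x := by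
  unfold stirlingApprox; positivity

lemma log_stirlingApprox {x : ℝ} (hx : 0 < x) :
    log (stirlingApprox x) = log (2 * π) / 2 + log x / 2 + x * log x - x := by
  rw [stirlingApprox, log_mul (by positivity) (by positivity), log_sqrt (by positivity),
    log_rpow (by positivity), log_mul (by positivity) hx.ne', log_div hx.ne' (exp_ne_zero 1),
    log_exp]
  ring

lemma abs_log_stirlingApprox_sub_le {x y : ℝ} (hy : 0 < y) (hyx : y ≤ x) (hxy : x ≤ y + 1) :
    |log (stirlingApprox x) - log (stirlingApprox y) - (x - y) * log x| ≤ 1 / y := by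
  have hx : 0 < x := hy.trans_le hyx
  rw [log_stirlingApprox hx, log_stirlingApprox hy]
  set L := log x - log y
  have hup : y * L ≤ x - y := by
    have := log_sub_log_le_sub_div hy hx
    rwa [le_div_iff₀ hy, mul_comm] at this
  have hlo : (x - y) / x ≤ L := sub_div_le_log_sub_log hy hx
  have hL : 0 ≤ L := le_trans (by positivity) hlo
  have hLy : L ≤ 1 / y := by
    rw [le_div_iff₀ hy]; linarith
  have hθ : (x - y) - y * ((x - y) / x) = (x - y) ^ 2 / x := by
    field_simp
  have hθx : (x - y) ^ 2 / x ≤ 1 / y := by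
    have : (x - y) ^ 2 ≤ 1 := by nlinarith
    rw [div_le_div_iff₀ hx hy]; nlinarith [mul_le_mul_of_nonneg_right this hy.le]
  rw [abs_le]
  constructor <;> nlinarith [mul_le_mul_of_nonneg_left hlo hy.le]

lemma tendsto_log_factorial_sub_log_stirlingApprox :
    Tendsto (fun n : ℕ => log (n ! : ℝ) - log (stirlingApprox n)) atTop (nhds 0) := by
  have hratio : Tendsto (fun n : ℕ => (n ! : ℝ) / stirlingApprox n) atTop (nhds 1) := by
    refine ((Asymptotics.isEquivalent_iff_tendsto_one ?_).1
      Stirling.factorial_isEquivalent_stirling).congr fun n => ?_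
    · filter_upwards [eventually_ne_atTop 0] with n hn
      positivity
    · simp [stirlingApprox, mul_comm (2 : ℝ) π, mul_right_comm]
  have hlog := hratio.log one_ne_zero
  rw [log_one] at hlog
  refine hlog.congr' ?_
  filter_upwards [eventually_ne_atTop 0] with n hn
  exact log_div (by positivity) (stirlingApprox_pos (by positivity)).ne'

theorem tendsto_Gamma_add_one_div_stirlingApprox :
    Tendsto (fun x : ℝ => Gamma (x + 1) / stirlingApprox x) atTop (nhds 1) := by
  have hfloor : Tendsto (fun x : ℝ => ⌊x⌋₊) atTop atTop := tendsto_nat_floor_atTop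
  have hnat := tendsto_log_factorial_sub_log_stirlingApprox.comp hfloor
  have herr : Tendsto (fun x : ℝ => x⁻¹ + (⌊x⌋₊ : ℝ)⁻¹) atTop (nhds 0) := by
    simpa using tendsto_inv_atTop_zero.add
      (tendsto_inv_atTop_zero.comp (tendsto_natCast_atTop_atTop.comp hfloor))
  have hclose : ∀ᶠ x : ℝ in atTop,
      ‖(log (Gamma (x + 1)) - log (stirlingApprox x)) -
        (log (⌊x⌋₊ ! : ℝ) - log (stirlingApprox ⌊x⌋₊))‖ ≤ x⁻¹ + (⌊x⌋₊ : ℝ)⁻¹ := by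
    filter_upwards [eventually_ge_atTop 1] with x hx
    have hn : (1 : ℝ) ≤ ⌊x⌋₊ := by exact_mod_cast Nat.one_le_floor_iff _ |>.2 hx
    have hnx : (⌊x⌋₊ : ℝ) ≤ x := Nat.floor_le (by linarith)
    have hxn : x ≤ ⌊x⌋₊ + 1 := (Nat.lt_floor_add_one x).le
    have hΓ := abs_log_Gamma_add_one_sub_le (by linarith) hnx hxn (by linarith)
    have hS := abs_log_stirlingApprox_sub_le (by linarith) hnx hxn
    rw [Gamma_nat_eq_factorial, one_div] at hΓ
    rw [one_div] at hS
    calc _ = |(log (Gamma (x + 1)) - log (⌊x⌋₊ ! : ℝ) - (x - ⌊x⌋₊) * log x) -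
          (log (stirlingApprox x) - log (stirlingApprox ⌊x⌋₊) - (x - ⌊x⌋₊) * log x)| := by
          rw [Real.norm_eq_abs]; ring_nf
      _ ≤ _ := (abs_sub _ _).trans (add_le_add hΓ hS)
  have hlog : Tendsto (fun x => log (Gamma (x + 1)) - log (stirlingApprox x)) atTop (nhds 0) := by
    simpa using (squeeze_zero_norm' hclose herr).add hnat
  have hexp := (continuous_exp.tendsto 0).comp hlog
  rw [exp_zero] at hexp
  refine hexp.congr' ?_
  filter_upwards [eventually_gt_atTop 0] with x hx
  rw [Function.comp_apply, ← log_div (Gamma_pos_of_pos (by linarith)).ne'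
    (stirlingApprox_pos hx).ne', exp_log (div_pos (Gamma_pos_of_pos (by linarith))
    (stirlingApprox_pos hx))]

lemma tendsto_one_add_rpow_of_tendsto_mul {α : Type*} {l : Filter α} {f g : α → ℝ}
    (hf : ∀ᶠ a in l, 0 ≤ f a) (hg : ∀ᶠ a in l, 0 ≤ g a) (hfg : Tendsto (f * g) l (nhds 0)) :
    Tendsto (fun a => (1 + f a) ^ g a) l (nhds 1) := by
  have hexp := (continuous_exp.tendsto 0).comp hfg
  rw [exp_zero] at hexp
  refine tendsto_of_tendsto_of_tendsto_of_le_of_le' tendsto_const_nhds hexp ?_ ?_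
  · filter_upwards [hf, hg] with a hfa hga
    exact one_le_rpow (by simpa using hfa) hga
  · filter_upwards [hf, hg] with a hfa hga
    calc (1 + f a) ^ g a ≤ exp (f a) ^ g a := by
          gcongr
          linarith [add_one_le_exp (f a)]
      _ = exp (f a * g a) := by rw [← exp_mul]

lemma tendsto_chen_correction_factor :
    Tendsto (fun x : ℝ => (1 + 1 / (12 * x ^ 3 + (24/7) * x - 1/2)) ^ (x ^ 2 + 53/210))
      atTop (nhds 1) := by
  have hden : ∀ᶠ x : ℝ in atTop, 0 < x ∧ 0 < 12 * x ^ 3 + (24/7) * x - 1/2 ∧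
      x * (x ^ 2 + 53/210) ≤ 12 * x ^ 3 + (24/7) * x - 1/2 := by
    filter_upwards [eventually_ge_atTop 1] with x hx
    have hx3 := pow_le_pow_left₀ zero_le_one hx 3
    exact ⟨by linarith, by nlinarith, by nlinarith⟩
  refine tendsto_one_add_rpow_of_tendsto_mul ?_ (.of_forall fun x => by positivity) ?_
  · filter_upwards [hden] with x ⟨_, hD, _⟩
    positivity
  · refine squeeze_zero' ?_ ?_ tendsto_inv_atTop_zero
    · filter_upwards [hden] with x ⟨_, hD, _⟩
      exact mul_nonneg (by positivity) (by positivity)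
    · filter_upwards [hden] with x ⟨hx, hD, hle⟩
      rw [Pi.mul_apply, one_div_mul_eq_div, div_le_iff₀ hD, inv_mul_eq_div, le_div_iff₀ hx]
      linarith

theorem stmt_9 :
    Tendsto (fun x : ℝ => Gamma (x + 1) /
      (Real.sqrt (2 * π * x) * (x / exp 1) ^ x *
        (1 + 1 / (12 * x ^ 3 + (24/7) * x - 1/2)) ^ (x ^ 2 + 53/210))) atTop (nhds 1) := by
  have h := tendsto_Gamma_add_one_div_stirlingApprox.div tendsto_chen_correction_factor one_ne_zero
  rw [div_one] at h
  exact h.congr fun x => div_div _ _ _
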